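/- arXiv:1610.09795 — 2 statements merged into one kernel-verified Lean document; each statement's English description precedes it below -/
import Mathlib

section
/- Let D be a DBM over n clocks such that every cyclic path in D (a path with p₀ = p_m and m ≥ 1) has weight ≥ 0. Then Canon(D) is canonical, i.e. Canon(D) i j ≤ Canon(D) i k + Canon(D) k j for all i, j, k. -/
/-- A DBM over `n` clocks: index `0` is the reference clock. -/
abbrev DBM (n : ℕ) := Fin (n + 1) → Fin (n + 1) → WithTop ℝ

/-- A DBM is canonical if it satisfies the triangle inequality. -/
def Canonical {n : ℕ} (D : DBM n) : Prop :=
  ∀ i j k, D i j ≤ D i k + D k j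

/-- Weight of the path `p 0, p 1, …, p m` in `D`, computed in `WithTop ℝ`. -/
def pathWeight {n : ℕ} (D : DBM n) (p : ℕ → Fin (n + 1)) (m : ℕ) : WithTop ℝ :=
  ∑ k ∈ Finset.range m, D (p k) (p (k + 1))

/-- Canonicalization: `Canon D i j` is the minimum weight over all paths from `i` to `j`
with at most `n + 1` edges (the minimum of a finite nonempty set in `WithTop ℝ`). -/
noncomputable def Canon {n : ℕ} (D : DBM n) : DBM n := fun i j =>
  sInf {w | ∃ m p, 1 ≤ m ∧ m ≤ n + 1 ∧ p 0 = i ∧ p m = j ∧ w = pathWeight D p m}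

/-!
A path of more than `n + 1` edges visits some clock twice among its first `n + 2` vertices;
cutting out the cycle between the two visits does not increase the weight, because cycles are
nonnegative. Iterating, `Canon D i j` is at most the weight of *every* path from `i` to `j`.
The triangle inequality follows by concatenating optimal paths `i ⇝ k` and `k ⇝ j`.
-/

namespace DBM

variable {n : ℕ}

def NoNegativeCycle (D : DBM n) : Prop :=
  ∀ (m : ℕ) (p : ℕ → Fin (n + 1)), 1 ≤ m → p 0 = p m → (0 : WithTop ℝ) ≤ pathWeight D p m

def pathAppend {α : Type*} (p : ℕ → α) (a : ℕ) (q : ℕ → α) : ℕ → α :=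
  fun t => if t ≤ a then p t else q (t - a)

section pathAppend

variable {α : Type*} {p q : ℕ → α} {a : ℕ}

lemma pathAppend_of_le {t : ℕ} (ht : t ≤ a) : pathAppend p a q t = p t := if_pos ht

lemma pathAppend_add (h : p a = q 0) (t : ℕ) : pathAppend p a q (a + t) = q t := by
  rcases Nat.eq_zero_or_pos t with rfl | ht
  · simpa [pathAppend] using h
  · simp [pathAppend, show ¬a + t ≤ a by omega]

end pathAppend

lemma pathWeight_congr {D : DBM n} {p q : ℕ → Fin (n + 1)} {m : ℕ}
    (h : ∀ t ≤ m, p t = q t) : pathWeight D p m = pathWeight D q m :=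
  Finset.sum_congr rfl fun k hk => by
    rw [Finset.mem_range] at hk
    rw [h k hk.le, h (k + 1) hk]

lemma pathWeight_add (D : DBM n) (p : ℕ → Fin (n + 1)) (a b : ℕ) :
    pathWeight D p (a + b) = pathWeight D p a + pathWeight D (fun t => p (a + t)) b :=
  Finset.sum_range_add _ a b

lemma pathWeight_pathAppend (D : DBM n) {p q : ℕ → Fin (n + 1)} {a : ℕ} (h : p a = q 0)
    (b : ℕ) : pathWeight D (pathAppend p a q) (a + b) = pathWeight D p a + pathWeight D q b := by
  rw [pathWeight_add]
  congr 1
  · exact pathWeight_congr fun t ht => pathAppend_of_le ht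
  · exact pathWeight_congr fun t _ => pathAppend_add h t

/-- Cutting out the cycle between two visits `a < b` of the same clock. -/
lemma pathWeight_pathAppend_le_of_cycle (D : DBM n) (hcyc : NoNegativeCycle D)
    {p : ℕ → Fin (n + 1)} {a b : ℕ} (hab : a < b) (hpab : p a = p b) (c : ℕ) :
    pathWeight D (pathAppend p a fun t => p (b + t)) (a + c) ≤ pathWeight D p (b + c) := by
  have hcycle : 0 ≤ pathWeight D (fun t => p (a + t)) (b - a) :=
    hcyc _ _ (by omega) (by simpa [Nat.add_sub_cancel' hab.le] using hpab)
  have hsplit :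
      pathWeight D p b = pathWeight D p a + pathWeight D (fun t => p (a + t)) (b - a) := by
    rw [← pathWeight_add, Nat.add_sub_cancel' hab.le]
  rw [pathWeight_pathAppend D (by simpa using hpab), pathWeight_add D p b, hsplit, add_assoc]
  exact add_le_add_right (le_add_of_nonneg_left hcycle) _

def shortPathWeights (D : DBM n) (i j : Fin (n + 1)) : Set (WithTop ℝ) :=
  {w | ∃ m p, 1 ≤ m ∧ m ≤ n + 1 ∧ p 0 = i ∧ p m = j ∧ w = pathWeight D p m}

lemma shortPathWeights_nonempty (D : DBM n) (i j : Fin (n + 1)) :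
    (shortPathWeights D i j).Nonempty :=
  ⟨_, 1, fun t => if t = 0 then i else j, le_rfl, by omega, rfl, rfl, rfl⟩

lemma shortPathWeights_finite (D : DBM n) (i j : Fin (n + 1)) :
    (shortPathWeights D i j).Finite := by
  refine (Set.finite_range fun mf : Fin (n + 2) × (Fin (n + 2) → Fin (n + 1)) =>
    pathWeight D (fun t => mf.2 (Fin.ofNat (n + 2) t)) mf.1).subset ?_
  rintro w ⟨m, p, -, hm, -, -, rfl⟩
  have hval {t : ℕ} (ht : t ≤ m) : (Fin.ofNat (n + 2) t : ℕ) = t := by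
    rw [Fin.val_ofNat, Nat.mod_eq_of_lt (by omega)]
  refine ⟨(Fin.ofNat (n + 2) m, fun s => p s), ?_⟩
  simp only [hval le_rfl]
  exact pathWeight_congr fun t ht => by rw [hval ht]

lemma canon_mem_shortPathWeights (D : DBM n) (i j : Fin (n + 1)) :
    Canon D i j ∈ shortPathWeights D i j :=
  (shortPathWeights_nonempty D i j).csInf_mem (shortPathWeights_finite D i j)

lemma canon_le_of_mem {D : DBM n} {i j : Fin (n + 1)} {w : WithTop ℝ}
    (hw : w ∈ shortPathWeights D i j) : Canon D i j ≤ w :=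
  csInf_le (shortPathWeights_finite D i j).bddBelow hw

lemma exists_lt_le_card_apply_eq {α : Type*} [Fintype α] (p : ℕ → α) :
    ∃ a b, a < b ∧ b ≤ Fintype.card α ∧ p a = p b := by
  obtain ⟨x, y, hxy, hp⟩ :=
    Fintype.exists_ne_map_eq_of_card_lt (fun t : Fin (Fintype.card α + 1) => p t) (by simp)
  rcases lt_or_gt_of_ne (Fin.val_ne_of_ne hxy) with h | h
  · exact ⟨x, y, h, by omega, hp⟩
  · exact ⟨y, x, h, by omega, hp.symm⟩

theorem canon_le_pathWeight (D : DBM n) (hcyc : NoNegativeCycle D)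
    (m : ℕ) (p : ℕ → Fin (n + 1)) (hm : 1 ≤ m) : Canon D (p 0) (p m) ≤ pathWeight D p m := by
  induction m using Nat.strong_induction_on generalizing p with
  | _ m ih =>
    by_cases hshort : m ≤ n + 1
    · exact canon_le_of_mem ⟨m, p, hm, hshort, rfl, rfl, rfl⟩
    obtain ⟨a, b, hab, hb, hpab⟩ := exists_lt_le_card_apply_eq p
    rw [Fintype.card_fin] at hb
    obtain ⟨c, rfl⟩ : ∃ c, m = b + c := ⟨m - b, by omega⟩
    set q := pathAppend p a fun t => p (b + t)
    have hq0 : q 0 = p 0 := pathAppend_of_le (Nat.zero_le a)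
    have hqc : q (a + c) = p (b + c) := pathAppend_add (by simpa using hpab) c
    calc Canon D (p 0) (p (b + c)) = Canon D (q 0) (q (a + c)) := by rw [hq0, hqc]
      _ ≤ pathWeight D q (a + c) := ih (a + c) (by omega) q (by omega)
      _ ≤ pathWeight D p (b + c) := pathWeight_pathAppend_le_of_cycle D hcyc hab hpab c

end DBM

open DBM in
/-- if every cyclic path of `D` has nonnegative weight, then `Canon D`
satisfies the triangle inequality, i.e. it is canonical. -/
theorem canon_canonical_of_no_negative_cycle {n : ℕ} (D : DBM n)
    (hcyc : ∀ (m : ℕ) (p : ℕ → Fin (n + 1)), 1 ≤ m → p 0 = p m →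
      (0 : WithTop ℝ) ≤ pathWeight D p m) :
    Canonical (Canon D) := by
  intro i j k
  obtain ⟨m₁, p₁, hm₁, -, hp₁i, hp₁k, hw₁⟩ := canon_mem_shortPathWeights D i k
  obtain ⟨m₂, p₂, -, -, hp₂k, hp₂j, hw₂⟩ := canon_mem_shortPathWeights D k j
  have hjoin : p₁ m₁ = p₂ 0 := hp₁k.trans hp₂k.symm
  set q := pathAppend p₁ m₁ p₂
  have hq0 : q 0 = i := (pathAppend_of_le (Nat.zero_le m₁)).trans hp₁i
  have hqend : q (m₁ + m₂) = j := (pathAppend_add hjoin m₂).trans hp₂j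
  calc Canon D i j = Canon D (q 0) (q (m₁ + m₂)) := by rw [hq0, hqend]
    _ ≤ pathWeight D q (m₁ + m₂) := canon_le_pathWeight D hcyc _ q (by omega)
    _ = Canon D i k + Canon D k j := by rw [pathWeight_pathAppend D hjoin, hw₁, hw₂]
end

section
/- Let D be a canonical DBM over n clocks, let i₀ : Fin (n+1) be a distinguished clock index (the observer clock δ), and let D' be any DBM with D i j ≤ D' i j for all i, j such that D' agrees with D on every entry of row i₀ and of column i₀ (∀ k, D' i₀ k = D i₀ k ∧ D' k i₀ = D k i₀). Then canonicalizing D' preserves the entire row and column of i₀: ∀ k, Canon(D') i₀ k = D i₀ k ∧ Canon(D') k i₀ = D k i₀. In particular, an extrapolation that never touches the constraints involving the observer clock, followed by canonicalization, keeps all bounds on the observer clock precise. -/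
/-!
If `D` is canonical, the triangle inequality bounds every path weight in `D` from below by the
direct entry, and a dominating `D'` only makes path weights larger. So `D a b` is a lower bound
for all path weights from `a` to `b` in `D'`, and on the row and column of the observer clock,
where `D' = D`, the one-edge path attains it.
-/

section

variable {n : ℕ}

def pathWeights (D : DBM n) (i j : Fin (n + 1)) : Set (WithTop ℝ) :=
  {w | ∃ m p, 1 ≤ m ∧ m ≤ n + 1 ∧ p 0 = i ∧ p m = j ∧ w = pathWeight D p m}

theorem canon_eq_sInf_pathWeights (D : DBM n) (i j : Fin (n + 1)) :
    Canon D i j = sInf (pathWeights D i j) :=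
  rfl

theorem pathWeight_mono {D D' : DBM n} (hle : ∀ i j, D i j ≤ D' i j) (p : ℕ → Fin (n + 1))
    (m : ℕ) : pathWeight D p m ≤ pathWeight D' p m :=
  Finset.sum_le_sum fun _ _ => hle _ _

theorem entry_mem_pathWeights (D : DBM n) (i j : Fin (n + 1)) : D i j ∈ pathWeights D i j :=
  ⟨1, fun t => if t = 0 then i else j, le_rfl, by omega, by simp, by simp, by simp [pathWeight]⟩

theorem Canonical.le_pathWeight {D : DBM n} (hD : Canonical D) (p : ℕ → Fin (n + 1))
    {m : ℕ} (hm : 1 ≤ m) : D (p 0) (p m) ≤ pathWeight D p m := by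
  induction m, hm using Nat.le_induction with
  | base => simp [pathWeight]
  | succ m hm ih =>
    calc D (p 0) (p (m + 1)) ≤ D (p 0) (p m) + D (p m) (p (m + 1)) := hD _ _ _
      _ ≤ pathWeight D p m + D (p m) (p (m + 1)) := by gcongr
      _ = pathWeight D p (m + 1) := (Finset.sum_range_succ _ m).symm

theorem Canonical.le_of_mem_pathWeights {D D' : DBM n} (hD : Canonical D)
    (hle : ∀ i j, D i j ≤ D' i j) {i j : Fin (n + 1)} {w : WithTop ℝ}
    (hw : w ∈ pathWeights D' i j) : D i j ≤ w := by
  obtain ⟨m, p, hm, -, rfl, rfl, rfl⟩ := hw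
  exact (hD.le_pathWeight p hm).trans (pathWeight_mono hle p m)

theorem Canonical.canon_eq_of_eq {D D' : DBM n} (hD : Canonical D)
    (hle : ∀ i j, D i j ≤ D' i j) {a b : Fin (n + 1)} (hab : D' a b = D a b) :
    Canon D' a b = D a b := by
  have hleast : IsLeast (pathWeights D' a b) (D a b) :=
    ⟨hab ▸ entry_mem_pathWeights D' a b, fun _ hw => hD.le_of_mem_pathWeights hle hw⟩
  rw [canon_eq_sInf_pathWeights, hleast.csInf_eq]

end

/-- if `D` is canonical, `D'` dominates `D` entrywise, and `D'` agrees
with `D` on the entire row and column of the observer clock `i₀`, then canonicalizing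
`D'` preserves the whole row and column of `i₀`: the bounds on the observer clock stay
precise. -/
theorem canon_preserves_observer_row_col {n : ℕ} (D D' : DBM n) (hD : Canonical D)
    (i₀ : Fin (n + 1)) (hle : ∀ i j, D i j ≤ D' i j)
    (hrowcol : ∀ k, D' i₀ k = D i₀ k ∧ D' k i₀ = D k i₀) :
    ∀ k, Canon D' i₀ k = D i₀ k ∧ Canon D' k i₀ = D k i₀ := fun k =>
  ⟨hD.canon_eq_of_eq hle (hrowcol k).1, hD.canon_eq_of_eq hle (hrowcol k).2⟩
end
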